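/- arXiv:1011.6520 — 2 statements merged into one kernel-verified Lean document; each statement's English description precedes it below -/
import Mathlib

section
/- Let (X,r) be a finite quantum binomial set. Every D-orbit of type (ii) in X³ has cardinality exactly 3 if and only if for all x, y ∈ X one has λ_{ρ_y(x)}(y) = λ_x(y) and ρ_{λ_x(y)}(x) = ρ_y(x) (in exponential notation: ^{x^y}y = ^{x}y and x^{(^{x}y)} = x^{y} for all x, y ∈ X). -/
/-- The map r¹² = r × id acting on X³ (realized as `X × X × X`). -/
def r12 {X : Type*} (r : X × X → X × X) : X × X × X → X × X × X :=
  fun p => ((r (p.1, p.2.1)).1, (r (p.1, p.2.1)).2, p.2.2)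

/-- The map r²³ = id × r acting on X³. -/
def r23 {X : Type*} (r : X × X → X × X) : X × X × X → X × X × X :=
  fun p => (p.1, (r (p.2.1, p.2.2)).1, (r (p.2.1, p.2.2)).2)

/-- One step of the action of the group D(r) generated by r¹² and r²³. -/
def dStep {X : Type*} (r : X × X → X × X) (a b : X × X × X) : Prop :=
  r12 r a = b ∨ r23 r a = b

/-- `O` is an orbit of the group D(r) = ⟨r¹², r²³⟩ acting on X³. -/
def IsDOrbit {X : Type*} (r : X × X → X × X) (O : Set (X × X × X)) : Prop :=
  ∃ a, O = {b | Relation.EqvGen (dStep r) a b}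

/-- `(X,r)` is a quantum binomial set: `r` is involutive, nondegenerate
(left and right actions are bijective) and square-free. -/
def IsQuantumBinomial {X : Type*} (r : X × X → X × X) : Prop :=
  Function.Involutive r ∧
  (∀ x : X, Function.Bijective (fun y => (r (x, y)).1)) ∧
  (∀ x : X, Function.Bijective (fun y => (r (y, x)).2)) ∧
  (∀ x : X, r (x, x) = (x, x))

/-- The subset Δ₂ × X of X³. -/
def Diag2X {X : Type*} : Set (X × X × X) := {p | p.1 = p.2.1}

/-- The subset X × Δ₂ of X³. -/
def XDiag2 {X : Type*} : Set (X × X × X) := {p | p.2.1 = p.2.2}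

/-- The diagonal Δ₃ of X³. -/
def Diag3 {X : Type*} : Set (X × X × X) := {p | p.1 = p.2.1 ∧ p.2.1 = p.2.2}

/-- `(X,r)` is braided: the braid relation r¹²r²³r¹² = r²³r¹²r²³ holds on X³. -/
def IsBraided {X : Type*} (r : X × X → X × X) : Prop :=
  (r12 r) ∘ (r23 r) ∘ (r12 r) = (r23 r) ∘ (r12 r) ∘ (r23 r)


/-! Square-freeness and nondegeneracy make `Δ₂ × X` and `X × Δ₂` exactly the fixed-point sets of
`r¹²` and `r²³`. A type (ii) orbit is therefore the orbit of some `A = (x, y, y)` with `x ≠ y`,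
fixed by `r²³`, or of some `(x, x, y)`, where the roles of `r¹²` and `r²³` are exchanged. Under the
two involutions the orbit of `A` is traced by the path `A, r¹² A, r²³ r¹² A, …`, whose first three
points are distinct; so it has three elements iff `r¹²` fixes the third point, and this is the
first cyclic identity at `(x, y)` (the second one for `(x, x, y)`). -/

open Function Relation

section TwoInvolutions

variable {α : Type*} {s t : α → α}

theorem Relation.EqvGen.mem_iff_of_closed (hs : Involutive s) (ht : Involutive t) {S : Set α}
    (hS : ∀ u ∈ S, s u ∈ S ∧ t u ∈ S) {a b : α}
    (h : EqvGen (fun u v => s u = v ∨ t u = v) a b) : a ∈ S ↔ b ∈ S := by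
  induction h with
  | rel u v huv =>
    rcases huv with rfl | rfl
    · exact ⟨fun hu => (hS u hu).1, fun hv => hs u ▸ (hS _ hv).1⟩
    · exact ⟨fun hu => (hS u hu).2, fun hv => ht u ▸ (hS _ hv).2⟩
  | refl => exact Iff.rfl
  | symm _ _ _ ih => exact ih.symm
  | trans _ _ _ _ _ ih₁ ih₂ => exact ih₁.trans ih₂

/-- The orbit of the `t`-fixed point `a` is swept out by the path
`a — s a — t (s a) — s (t (s a)) — ⋯`; it closes after three points exactly when `s` fixes the
third one. -/
theorem ncard_eqvGen_class_eq_three_iff (hs : Involutive s) (ht : Involutive t) {a : α}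
    (hta : t a = a) (hsa : s a ≠ a) (htsa : t (s a) ≠ s a) :
    {b | EqvGen (fun u v => s u = v ∨ t u = v) a b}.ncard = 3 ↔ s (t (s a)) = t (s a) := by
  set R : α → α → Prop := fun u v => s u = v ∨ t u = v
  have hab : EqvGen R a (s a) := EqvGen.rel _ _ (Or.inl rfl)
  have hac : EqvGen R a (t (s a)) := EqvGen.trans _ _ _ hab (EqvGen.rel _ _ (Or.inr rfl))
  have hca : t (s a) ≠ a := fun h => hsa (ht.injective (h.trans hta.symm))
  have hsub : {a, s a, t (s a)} ⊆ {b | EqvGen R a b} := by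
    rintro b (rfl | rfl | rfl)
    exacts [EqvGen.refl _, hab, hac]
  have hcard : ({a, s a, t (s a)} : Set α).ncard = 3 :=
    Set.ncard_eq_three.mpr ⟨_, _, _, hsa.symm, hca.symm, htsa.symm, rfl⟩
  constructor
  · intro h3
    have heq : {a, s a, t (s a)} = {b | EqvGen R a b} :=
      Set.eq_of_subset_of_ncard_le hsub (by rw [h3, hcard])
        (Set.finite_of_ncard_ne_zero (by rw [h3]; decide))
    have hmem : s (t (s a)) ∈ ({a, s a, t (s a)} : Set α) :=
      heq ▸ EqvGen.trans _ _ _ hac (EqvGen.rel _ _ (Or.inl rfl))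
    rcases hmem with h | h | h
    · exact absurd (hs.injective (h.trans (hs a).symm)) htsa
    · exact absurd (hs.injective h) hca
    · exact h
  · intro hfix
    have hclosed : ∀ u ∈ ({a, s a, t (s a)} : Set α),
        s u ∈ ({a, s a, t (s a)} : Set α) ∧ t u ∈ ({a, s a, t (s a)} : Set α) := by
      rintro u (rfl | rfl | rfl)
      · simp [hta]
      · simp [hs a]
      · simp [hfix, ht (s a)]
    have hsup : {b | EqvGen R a b} ⊆ {a, s a, t (s a)} := fun b hb =>
      (EqvGen.mem_iff_of_closed hs ht hclosed hb).mp (Set.mem_insert _ _)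
    rw [hsup.antisymm hsub, hcard]

end TwoInvolutions

def dOrbit {X : Type*} (r : X × X → X × X) (a : X × X × X) : Set (X × X × X) :=
  {b | EqvGen (dStep r) a b}

theorem dOrbit_eq_of_mem {X : Type*} {r : X × X → X × X} {a b : X × X × X}
    (hb : b ∈ dOrbit r a) : dOrbit r a = dOrbit r b :=
  Set.ext fun _ => ⟨fun h => EqvGen.trans _ _ _ (EqvGen.symm _ _ hb) h,
    fun h => EqvGen.trans _ _ _ hb h⟩

namespace IsQuantumBinomial

variable {X : Type*} {r : X × X → X × X}

theorem fst_eq_left_iff (hqb : IsQuantumBinomial r) {x y : X} : (r (x, y)).1 = x ↔ y = x :=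
  ⟨fun h => (hqb.2.1 x).1 (show (r (x, y)).1 = (r (x, x)).1 by rw [h, hqb.2.2.2]),
    by rintro rfl; rw [hqb.2.2.2]⟩

theorem snd_eq_right_iff (hqb : IsQuantumBinomial r) {x y : X} : (r (x, y)).2 = y ↔ x = y :=
  ⟨fun h => (hqb.2.2.1 y).1 (show (r (x, y)).2 = (r (y, y)).2 by rw [h, hqb.2.2.2]),
    by rintro rfl; rw [hqb.2.2.2]⟩

theorem r12_involutive (hqb : IsQuantumBinomial r) : Involutive (r12 r) := by
  rintro ⟨x, y, z⟩
  simp only [r12, Prod.mk.eta, hqb.1 (x, y)]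

theorem r23_involutive (hqb : IsQuantumBinomial r) : Involutive (r23 r) := by
  rintro ⟨x, y, z⟩
  simp only [r23, Prod.mk.eta, hqb.1 (y, z)]

theorem r12_eq_self_iff (hqb : IsQuantumBinomial r) {p : X × X × X} :
    r12 r p = p ↔ p ∈ Diag2X := by
  obtain ⟨x, y, z⟩ := p
  refine ⟨fun h => (hqb.fst_eq_left_iff.mp (congrArg Prod.fst h :)).symm, ?_⟩
  rintro (rfl : x = y)
  simp only [r12, hqb.2.2.2]

theorem r23_eq_self_iff (hqb : IsQuantumBinomial r) {p : X × X × X} :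
    r23 r p = p ↔ p ∈ XDiag2 := by
  obtain ⟨x, y, z⟩ := p
  refine ⟨fun h => hqb.snd_eq_right_iff.mp (congrArg (·.2.2) h :), ?_⟩
  rintro (rfl : y = z)
  simp only [r23, hqb.2.2.2]

theorem ncard_dOrbit_xyy_eq_three_iff (hqb : IsQuantumBinomial r) {x y : X} (hxy : x ≠ y) :
    (dOrbit r (x, y, y)).ncard = 3 ↔ (r ((r (x, y)).2, y)).1 = (r (x, y)).1 := by
  have hrho : (r (x, y)).2 ≠ y := hqb.snd_eq_right_iff.not.mpr hxy
  refine (ncard_eqvGen_class_eq_three_iff (a := (x, y, y)) hqb.r12_involutive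
    hqb.r23_involutive (hqb.r23_eq_self_iff.mpr rfl) (hqb.r12_eq_self_iff.not.mpr hxy)
    (hqb.r23_eq_self_iff.not.mpr hrho)).trans ?_
  rw [hqb.r12_eq_self_iff]
  exact eq_comm

theorem ncard_dOrbit_xxy_eq_three_iff (hqb : IsQuantumBinomial r) {x y : X} (hxy : x ≠ y) :
    (dOrbit r (x, x, y)).ncard = 3 ↔ (r (x, (r (x, y)).1)).2 = (r (x, y)).2 := by
  have hswap : dStep r = fun u v => r23 r u = v ∨ r12 r u = v := by
    ext; exact or_comm
  have hlam : x ≠ (r (x, y)).1 := fun h => hxy (hqb.fst_eq_left_iff.mp h.symm).symm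
  rw [dOrbit, hswap]
  refine (ncard_eqvGen_class_eq_three_iff (a := (x, x, y)) hqb.r23_involutive
    hqb.r12_involutive (hqb.r12_eq_self_iff.mpr rfl) (hqb.r23_eq_self_iff.not.mpr hxy)
    (hqb.r12_eq_self_iff.not.mpr hlam)).trans ?_
  exact hqb.r23_eq_self_iff

end IsQuantumBinomial

theorem typeII_orbits_card_three_iff_cyclic_general {X : Type*}
    (r : X × X → X × X) (hqb : IsQuantumBinomial r) :
    (∀ O : Set (X × X × X), IsDOrbit r O →
        (O ∩ ((Diag2X ∪ XDiag2) \ Diag3)).Nonempty → O.ncard = 3) ↔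
    (∀ x y : X, (r ((r (x, y)).2, y)).1 = (r (x, y)).1 ∧
        (r (x, (r (x, y)).1)).2 = (r (x, y)).2) := by
  constructor
  · intro h3 x y
    rcases eq_or_ne x y with rfl | hxy
    · simp only [hqb.2.2.2, and_self]
    have h3_of_mem {p : X × X × X} (hp : p ∈ (Diag2X ∪ XDiag2) \ Diag3) :
        (dOrbit r p).ncard = 3 := h3 _ ⟨p, rfl⟩ ⟨p, EqvGen.refl p, hp⟩
    exact ⟨(hqb.ncard_dOrbit_xyy_eq_three_iff hxy).mp
        (h3_of_mem ⟨Or.inr rfl, fun h => hxy h.1⟩),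
      (hqb.ncard_dOrbit_xxy_eq_three_iff hxy).mp
        (h3_of_mem ⟨Or.inl rfl, fun h => hxy h.2⟩)⟩
  · rintro hcyc O ⟨a, rfl⟩ ⟨⟨x, y, z⟩, hp, hdiag, hnotdiag⟩
    change (dOrbit r a).ncard = 3
    rw [dOrbit_eq_of_mem hp]
    rcases hdiag with (rfl : x = y) | (rfl : y = z)
    · exact (hqb.ncard_dOrbit_xxy_eq_three_iff fun h => hnotdiag ⟨rfl, h⟩).mpr (hcyc x z).2
    · exact (hqb.ncard_dOrbit_xyy_eq_three_iff fun h => hnotdiag ⟨h, rfl⟩).mpr (hcyc x y).1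

/-- For a finite quantum binomial set, every D-orbit of type (ii) has exactly
3 elements iff the cyclic-type identities  λ_{ρ_y(x)}(y) = λ_x(y)  and
ρ_{λ_x(y)}(x) = ρ_y(x)  hold for all x, y ∈ X.  Here λ_x(y) = (r (x,y)).1 and
ρ_y(x) = (r (x,y)).2. -/
theorem typeII_orbits_card_three_iff_cyclic {X : Type*} [Fintype X]
    (r : X × X → X × X) (hqb : IsQuantumBinomial r) :
    (∀ O : Set (X × X × X), IsDOrbit r O →
        (O ∩ ((Diag2X ∪ XDiag2) \ Diag3)).Nonempty → O.ncard = 3) ↔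
    (∀ x y : X, (r ((r (x, y)).2, y)).1 = (r (x, y)).1 ∧
        (r (x, (r (x, y)).1)).2 = (r (x, y)).2) :=
  typeII_orbits_card_three_iff_cyclic_general r hqb
end

section
/- Let (X,r) be a finite quantum binomial set with |X| = n, and let q be the number of square-free D-orbits in X³, i.e. D-orbits O with O ∩ ((Δ₂ × X) ∪ (X × Δ₂)) = ∅. Then q ≤ C(n,3) = n(n−1)(n−2)/6. -/
/-!
Write `s = r¹²`, `t = r²³`. Nondegeneracy and square-freeness give `λ_x y ≠ x` for `y ≠ x`;
on a square-free orbit this makes `a, s a, t a, s t a, t s a, s t s a` pairwise distinct, so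
the orbit has at least six points. A point `(x, y, z)` of a square-free orbit has `x ≠ y`,
`y ≠ z` and, since `t (x, y, z) = (x, λ_y z, _)` lies in the orbit too, `x ≠ λ_y z`. Hence the
bijection `(x, y, z) ↦ (x, y, λ_y z)` maps the disjoint union of the square-free orbits into
the `n (n - 1) (n - 2) = 6 C(n, 3)` triples of distinct elements.
-/

open Function

theorem Set.mul_ncard_le_ncard_of_pairwiseDisjoint {α : Type*} {F : Set (Set α)} {U : Set α}
    {k : ℕ} (hU : U.Finite) (hsub : ∀ O ∈ F, O ⊆ U) (hk : ∀ O ∈ F, k ≤ O.ncard)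
    (hF : F.PairwiseDisjoint id) : k * F.ncard ≤ U.ncard := by
  have hFfin : F.Finite := hU.finite_subsets.subset hsub
  calc k * F.ncard = ∑ _O ∈ hFfin.toFinset, k := by
        rw [Finset.sum_const, smul_eq_mul, mul_comm, Set.ncard_eq_toFinset_card F hFfin]
    _ ≤ ∑ O ∈ hFfin.toFinset, O.ncard :=
        Finset.sum_le_sum fun O hO => hk O (hFfin.mem_toFinset.mp hO)
    _ = ∑ᶠ O ∈ F, O.ncard := (finsum_mem_eq_finite_toFinset_sum _ hFfin).symm
    _ = (⋃ O ∈ F, O).ncard :=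
        (hFfin.ncard_biUnion (fun O hO => hU.subset (hsub O hO)) hF).symm
    _ ≤ U.ncard := Set.ncard_le_ncard (Set.iUnion₂_subset hsub) hU

theorem six_le_ncard_of_involutive {β : Type*} [Finite β] {s t : β → β} (hs : Involutive s)
    (ht : Involutive t) {O : Set β} {a : β} (ha : a ∈ O) (hsO : ∀ p ∈ O, s p ∈ O)
    (htO : ∀ p ∈ O, t p ∈ O) (hs_ne : ∀ p ∈ O, s p ≠ p) (ht_ne : ∀ p ∈ O, t p ≠ p)
    (hst : ∀ p ∈ O, s p ≠ t p) (htsst : ∀ p ∈ O, t (s p) ≠ s (t p)) : 6 ≤ O.ncard := by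
  classical
  have hsa := hsO a ha
  have hta := htO a ha
  have htsa := htO _ hsa
  -- cancelling `s` and `t`, a coincidence among the six points contradicts a hypothesis at
  -- `a`, `s a`, `t a` or `t (s a)`
  have hnodup : [a, s a, t a, s (t a), t (s a), s (t (s a))].Nodup := by
    have := hs_ne a ha; have := hs_ne _ hta; have := hs_ne _ htsa
    have := ht_ne a ha; have := ht_ne _ hsa; have := hst a ha; have := htsst a ha
    have hs' : ∀ x, s (s x) = x := hs
    have ht' : ∀ x, t (t x) = x := ht
    clear hs_ne ht_ne hst htsst hsO htO
    simp only [List.nodup_cons, List.mem_cons, List.not_mem_nil, List.nodup_nil]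
    grind
  calc 6 = [a, s a, t a, s (t a), t (s a), s (t (s a))].toFinset.card := by
        rw [List.toFinset_card_of_nodup hnodup]; rfl
    _ ≤ O.ncard := by
        rw [← Set.ncard_coe_finset]
        refine Set.ncard_le_ncard fun p hp => ?_
        simp only [List.coe_toFinset, List.mem_cons, List.not_mem_nil, or_false] at hp
        rcases hp with rfl | rfl | rfl | rfl | rfl | rfl
        exacts [ha, hsa, hta, hsO _ hta, htsa, hsO _ htsa]

def distinctTriples (X : Type*) : Set (X × X × X) :=
  {p | p.1 ≠ p.2.1 ∧ p.1 ≠ p.2.2 ∧ p.2.1 ≠ p.2.2}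

def embeddingFinThreeEquivDistinctTriples (X : Type*) : (Fin 3 ↪ X) ≃ distinctTriples X where
  toFun f := ⟨(f 0, f 1, f 2), by simp [distinctTriples, f.injective.eq_iff]⟩
  invFun p := ⟨![p.1.1, p.1.2.1, p.1.2.2], by
    obtain ⟨h01, h02, h12⟩ := p.2
    intro i j hij
    fin_cases i <;> fin_cases j <;> simp_all [eq_comm]⟩
  left_inv f := by ext i; fin_cases i <;> rfl
  right_inv p := rfl

theorem ncard_distinctTriples (X : Type*) [Fintype X] :
    (distinctTriples X).ncard = (Fintype.card X).descFactorial 3 := by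
  rw [← Nat.card_coe_set_eq, ← Nat.card_congr (embeddingFinThreeEquivDistinctTriples X),
    Nat.card_eq_fintype_card, Fintype.card_embedding_eq, Fintype.card_fin]

section QuantumBinomial

variable {X : Type*} {r : X × X → X × X}

theorem r12_involutive (h : Involutive r) : Involutive (r12 r) := fun p => by
  simp only [r12, Prod.mk.eta, h _]

theorem r23_involutive (h : Involutive r) : Involutive (r23 r) := fun p => by
  simp only [r23, Prod.mk.eta, h _]

namespace IsDOrbit

theorem r12_mem {O : Set (X × X × X)} (hO : IsDOrbit r O) {p : X × X × X} (hp : p ∈ O) :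
    r12 r p ∈ O := by
  obtain ⟨a, rfl⟩ := hO
  exact .trans _ _ _ hp (.rel _ _ (.inl rfl))

theorem r23_mem {O : Set (X × X × X)} (hO : IsDOrbit r O) {p : X × X × X} (hp : p ∈ O) :
    r23 r p ∈ O := by
  obtain ⟨a, rfl⟩ := hO
  exact .trans _ _ _ hp (.rel _ _ (.inr rfl))

theorem eq_of_mem {O : Set (X × X × X)} (hO : IsDOrbit r O) {p : X × X × X} (hp : p ∈ O) :
    O = {b | Relation.EqvGen (dStep r) p b} := by
  obtain ⟨a, rfl⟩ := hO
  ext b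
  exact ⟨fun hb => .trans _ _ _ (.symm _ _ hp) hb, fun hb => .trans _ _ _ hp hb⟩

theorem pairwiseDisjoint : {O | IsDOrbit r O}.PairwiseDisjoint id := by
  intro O₁ h₁ O₂ h₂ hne
  refine Set.disjoint_left.mpr fun p hp₁ hp₂ => hne ?_
  rw [eq_of_mem h₁ hp₁, eq_of_mem h₂ hp₂]

end IsDOrbit

theorem ne_and_ne_of_mem_of_squareFree {O : Set (X × X × X)} (hsq : O ∩ (Diag2X ∪ XDiag2) = ∅)
    {p : X × X × X} (hp : p ∈ O) : p.1 ≠ p.2.1 ∧ p.2.1 ≠ p.2.2 := by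
  have h := Set.eq_empty_iff_forall_notMem.mp hsq p
  simp only [Set.mem_inter_iff, Set.mem_union, Diag2X, XDiag2, Set.mem_ofPred_eq] at h
  tauto

namespace IsQuantumBinomial

theorem fst_apply_ne_left (hqb : IsQuantumBinomial r) {x y : X} (h : y ≠ x) :
    (r (x, y)).1 ≠ x :=
  fun hx => h ((hqb.2.1 x).1 (hx.trans (congrArg Prod.fst (hqb.2.2.2 x)).symm))

/-- `(x, y, z) ↦ (x, y, λ_y z)`. -/
noncomputable def shear (hqb : IsQuantumBinomial r) : X × X × X ≃ X × X × X :=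
  Equiv.prodCongrRight fun _ => Equiv.prodCongrRight fun y => .ofBijective _ (hqb.2.1 y)

theorem squareFree_orbit_subset_preimage_shear (hqb : IsQuantumBinomial r)
    {O : Set (X × X × X)} (hO : IsDOrbit r O) (hsq : O ∩ (Diag2X ∪ XDiag2) = ∅) :
    O ⊆ hqb.shear ⁻¹' distinctTriples X := by
  intro p hp
  obtain ⟨h₁₂, h₂₃⟩ := ne_and_ne_of_mem_of_squareFree hsq hp
  obtain ⟨h₁₂', -⟩ := ne_and_ne_of_mem_of_squareFree hsq (hO.r23_mem hp)
  exact ⟨h₁₂, h₁₂', (hqb.fst_apply_ne_left h₂₃.symm).symm⟩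

end IsQuantumBinomial

theorem IsDOrbit.six_le_ncard_of_squareFree [Finite X] (hqb : IsQuantumBinomial r)
    {O : Set (X × X × X)} (hO : IsDOrbit r O) (hsq : O ∩ (Diag2X ∪ XDiag2) = ∅) :
    6 ≤ O.ncard := by
  obtain ⟨a, rfl⟩ := id hO
  refine six_le_ncard_of_involutive (r12_involutive hqb.1) (r23_involutive hqb.1)
    (Relation.EqvGen.refl a) (fun _ => hO.r12_mem) (fun _ => hO.r23_mem) ?_ ?_ ?_ ?_ <;>
    intro p hp <;> obtain ⟨h₁₂, h₂₃⟩ := ne_and_ne_of_mem_of_squareFree hsq hp <;> intro h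
  · exact hqb.fst_apply_ne_left h₁₂.symm (congrArg Prod.fst h)
  · exact hqb.fst_apply_ne_left h₂₃.symm (congrArg (·.2.1) h)
  · exact hqb.fst_apply_ne_left h₁₂.symm (congrArg Prod.fst h)
  -- the first coordinates are `λ_{p₁} p₂` and `λ_{p₁} (λ_{p₂} p₃)`
  · have h₁ := congrArg Prod.fst h
    simp only [r12, r23] at h₁
    exact hqb.fst_apply_ne_left h₂₃.symm ((hqb.2.1 p.1).1 h₁).symm

end QuantumBinomial

/-- The number of square-free D-orbits in X³ of a finite quantum binomial set
with |X| = n is at most C(n,3). -/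
theorem card_squarefree_orbits_le {X : Type*} [Fintype X]
    (r : X × X → X × X) (hqb : IsQuantumBinomial r) :
    {O : Set (X × X × X) | IsDOrbit r O ∧ O ∩ (Diag2X ∪ XDiag2) = ∅}.ncard
      ≤ (Fintype.card X).choose 3 := by
  have h := Set.mul_ncard_le_ncard_of_pairwiseDisjoint (k := 6)
    (F := {O | IsDOrbit r O ∧ O ∩ (Diag2X ∪ XDiag2) = ∅}) (Set.toFinite _)
    (fun O hO => hqb.squareFree_orbit_subset_preimage_shear hO.1 hO.2)
    (fun O hO => hO.1.six_le_ncard_of_squareFree hqb hO.2)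
    (IsDOrbit.pairwiseDisjoint.subset fun O hO => hO.1)
  rw [Set.ncard_preimage_of_injective_subset_range hqb.shear.injective (by simp),
    ncard_distinctTriples, Nat.descFactorial_eq_factorial_mul_choose] at h
  exact Nat.le_of_mul_le_mul_left h (by norm_num)
end
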